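/- Let L be a Lie ring of characteristic 3 (3z = 0 for all z) satisfying ⁅⁅x,y⁆,x⁆ = 0 for all x, y. Then every left-normed bracket of length 4 starting with a bracket of two elements vanishes: ⁅⁅⁅⁅u,v⁆,x⁆,y⁆ = 0 for all u, v, x, y ∈ L. -/

import Mathlib

/-!
In a Lie ring with `⁅⁅x, y⁆, x⁆ = 0`, linearizing shows that `⁅⁅x, y⁆, z⁆` is an alternating
trilinear form; with the Jacobi identity its three cyclic terms coincide, so `3 • ⁅⁅x, y⁆, z⁆ = 0`.
Hence `f(a, b, c, d) = ⁅⁅⁅a, b⁆, c⁆, d⁆` is alternating in all four arguments, so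
`f(a, b, c, d) = f(c, d, a, b)`, while cycling the outer form gives
`f(a, b, c, d) = ⁅⁅c, d⁆, ⁅a, b⁆⁆ = -f(c, d, a, b)`. Thus `2 • f = 0` and `3 • f = 0`, so `f = 0`.
-/

section TwoEngel

variable {L : Type*} [LieRing L]

theorem lie_lie_eq_neg_lie_lie_swap (h : ∀ x y : L, ⁅⁅x, y⁆, x⁆ = 0) (x y z : L) :
    ⁅⁅x, y⁆, z⁆ = -⁅⁅z, y⁆, x⁆ := by
  have hxz := h (x + z) y
  simp only [add_lie, lie_add, h x y, h z y, zero_add, add_zero] at hxz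
  exact eq_neg_of_add_eq_zero_right hxz

theorem lie_lie_cycle (h : ∀ x y : L, ⁅⁅x, y⁆, x⁆ = 0) (x y z : L) :
    ⁅⁅x, y⁆, z⁆ = ⁅⁅y, z⁆, x⁆ := by
  rw [lie_lie_eq_neg_lie_lie_swap h, ← lie_skew y z, neg_lie]

theorem lie_lie_swap_right (h : ∀ x y : L, ⁅⁅x, y⁆, x⁆ = 0) (x y z : L) :
    ⁅⁅x, y⁆, z⁆ = -⁅⁅x, z⁆, y⁆ := by
  rw [lie_lie_cycle h, lie_lie_eq_neg_lie_lie_swap h]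

theorem three_nsmul_lie_lie (h : ∀ x y : L, ⁅⁅x, y⁆, x⁆ = 0) (x y z : L) :
    3 • ⁅⁅x, y⁆, z⁆ = 0 := by
  have jacobi : ⁅⁅x, y⁆, z⁆ + ⁅⁅y, z⁆, x⁆ + ⁅⁅z, x⁆, y⁆ = 0 := by
    rw [← neg_eq_zero, ← lie_jacobi x y z, ← lie_skew ⁅y, z⁆ x, ← lie_skew ⁅z, x⁆ y,
      ← lie_skew ⁅x, y⁆ z]
    abel
  rw [← lie_lie_cycle h x y z, lie_lie_cycle h z x y] at jacobi
  rw [← jacobi]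
  abel

theorem lie_lie_lie_swap_pairs (h : ∀ x y : L, ⁅⁅x, y⁆, x⁆ = 0) (a b c d : L) :
    ⁅⁅⁅a, b⁆, c⁆, d⁆ = ⁅⁅⁅c, d⁆, a⁆, b⁆ := by
  calc ⁅⁅⁅a, b⁆, c⁆, d⁆ = -⁅⁅⁅a, c⁆, b⁆, d⁆ := by rw [lie_lie_swap_right h a b c, neg_lie]
    _ = ⁅⁅⁅c, a⁆, b⁆, d⁆ := by rw [← lie_skew c a, neg_lie, neg_lie]
    _ = -⁅⁅⁅c, a⁆, d⁆, b⁆ := lie_lie_swap_right h _ _ _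
    _ = ⁅⁅⁅c, d⁆, a⁆, b⁆ := by rw [lie_lie_swap_right h c a d, neg_lie, neg_neg]

theorem two_nsmul_lie_lie_lie (h : ∀ x y : L, ⁅⁅x, y⁆, x⁆ = 0) (a b c d : L) :
    2 • ⁅⁅⁅a, b⁆, c⁆, d⁆ = 0 := by
  have hanti : ⁅⁅⁅a, b⁆, c⁆, d⁆ = -⁅⁅⁅c, d⁆, a⁆, b⁆ := by
    rw [lie_lie_cycle h ⁅a, b⁆, lie_lie_cycle h ⁅c, d⁆, lie_skew]
  nth_rewrite 2 [lie_lie_lie_swap_pairs h] at hanti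
  rw [two_nsmul, ← eq_neg_iff_add_eq_zero]
  exact hanti

end TwoEngel

theorem stmt_10_general (L : Type*) [LieRing L]
    (h : ∀ x y : L, ⁅⁅x, y⁆, x⁆ = 0) :
    ∀ u v x y : L, ⁅⁅⁅u, v⁆, x⁆, y⁆ = 0 := by
  intro u v x y
  have h2 := two_nsmul_lie_lie_lie h u v x y
  have h3 := three_nsmul_lie_lie h ⁅u, v⁆ x y
  calc ⁅⁅⁅u, v⁆, x⁆, y⁆ = 3 • ⁅⁅⁅u, v⁆, x⁆, y⁆ - 2 • ⁅⁅⁅u, v⁆, x⁆, y⁆ := by abel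
    _ = 0 := by rw [h3, h2, sub_zero]

theorem stmt_10 (L : Type*) [LieRing L]
    (hchar : ∀ z : L, 3 • z = 0)
    (h : ∀ x y : L, ⁅⁅x, y⁆, x⁆ = 0) :
    ∀ u v x y : L, ⁅⁅⁅u, v⁆, x⁆, y⁆ = 0 :=
  stmt_10_general L h
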